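/- Let u be a C⁶ function on the upper half-plane portion {(x,y) : y ≥ 0} near the origin, and define w(x,y) = −[u(x,−y) + 2y·u_y(x,−y) + y²·(Δu)(x,−y)] for y < 0. Then for y < 0, with F = Δ²u and Δ² applied in (x,y), Δ²w(x,y) = −[5F(x,−y) − 6y·F_y(x,−y) + y²·(ΔF)(x,−y)]. -/

import Mathlib

noncomputable def pdv (v : ℝ × ℝ) (f : ℝ → ℝ → ℝ) : ℝ → ℝ → ℝ :=
  fun x y => fderiv ℝ (fun p : ℝ × ℝ => f p.1 p.2) (x, y) v

lemma hasDerivAt_pd1 (f : ℝ → ℝ → ℝ)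
    (hf : Differentiable ℝ (fun p : ℝ × ℝ => f p.1 p.2)) (x y : ℝ) :
    HasDerivAt (fun s => f s y) (pdv (1, 0) f x y) x := by
  have h := (hf (x, y)).hasFDerivAt.comp_hasDerivAt x
    ((hasDerivAt_id x).prodMk (hasDerivAt_const x y))
  exact h

lemma hasDerivAt_pd2 (f : ℝ → ℝ → ℝ)
    (hf : Differentiable ℝ (fun p : ℝ × ℝ => f p.1 p.2)) (x y : ℝ) :
    HasDerivAt (fun t => f x t) (pdv (0, 1) f x y) y := by
  have h := (hf (x, y)).hasFDerivAt.comp_hasDerivAt y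
    ((hasDerivAt_const y x).prodMk (hasDerivAt_id y))
  exact h

lemma contDiff_pdv (v : ℝ × ℝ) (f : ℝ → ℝ → ℝ) (n : ℕ)
    (hf : ContDiff ℝ (n + 1 : ℕ) (fun p : ℝ × ℝ => f p.1 p.2)) :
    ContDiff ℝ (n : ℕ) (fun p : ℝ × ℝ => pdv v f p.1 p.2) := by
  have h : ContDiff ℝ (n : ℕ) (fderiv ℝ (fun p : ℝ × ℝ => f p.1 p.2)) :=
    hf.fderiv_right (by exact_mod_cast le_refl ((n+1 : ℕ) : WithTop ℕ∞))
  exact h.clm_apply contDiff_const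

lemma clairaut (f : ℝ → ℝ → ℝ) (hf : ContDiff ℝ 2 (fun p : ℝ × ℝ => f p.1 p.2))
    (v w : ℝ × ℝ) (x y : ℝ) :
    pdv v (pdv w f) x y = pdv w (pdv v f) x y := by
  set F := fun p : ℝ × ℝ => f p.1 p.2 with hF
  have hd : Differentiable ℝ F := hf.differentiable (by norm_num)
  have hd1 : Differentiable ℝ (fderiv ℝ F) :=
    (hf.fderiv_right (m := 1) (by norm_num)).differentiable (by norm_num)
  have key : ∀ a b : ℝ × ℝ,
      pdv a (pdv b f) x y = fderiv ℝ (fderiv ℝ F) (x, y) a b := by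
    intro a b
    have : (fun p : ℝ × ℝ => pdv b f p.1 p.2) = fun p => fderiv ℝ F p b := rfl
    rw [pdv, this]
    rw [fderiv_clm_apply (hd1 (x, y)) (differentiableAt_const b)]
    simp
  rw [key, key]
  exact second_derivative_symmetric (fun p => (hd p).hasFDerivAt)
    (hd1 (x, y)).hasFDerivAt v w

/-- The Laplacian of a function of two real variables, written in coordinates. -/
noncomputable def lap2 (f : ℝ → ℝ → ℝ) (x y : ℝ) : ℝ :=
  iteratedDeriv 2 (fun s => f s y) x + iteratedDeriv 2 (f x) y

lemma itd2 (g : ℝ → ℝ) (t : ℝ) : iteratedDeriv 2 g t = deriv (deriv g) t := by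
  rw [show (2:ℕ) = 1 + 1 from rfl, iteratedDeriv_succ, iteratedDeriv_one]

lemma lap2_eq (f : ℝ → ℝ → ℝ) (hf : ContDiff ℝ 2 (fun p : ℝ × ℝ => f p.1 p.2)) (x y : ℝ) :
    lap2 f x y = pdv (1,0) (pdv (1,0) f) x y + pdv (0,1) (pdv (0,1) f) x y := by
  have hd : Differentiable ℝ (fun p : ℝ × ℝ => f p.1 p.2) := hf.differentiable (by norm_num)
  have h1 : ContDiff ℝ ((1:ℕ) : WithTop ℕ∞) (fun p : ℝ × ℝ => pdv (1,0) f p.1 p.2) :=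
    contDiff_pdv _ f 1 (by exact_mod_cast hf)
  have h2 : ContDiff ℝ ((1:ℕ) : WithTop ℕ∞) (fun p : ℝ × ℝ => pdv (0,1) f p.1 p.2) :=
    contDiff_pdv _ f 1 (by exact_mod_cast hf)
  have hd1 : Differentiable ℝ (fun p : ℝ × ℝ => pdv (1,0) f p.1 p.2) :=
    h1.differentiable (by norm_num)
  have hd2 : Differentiable ℝ (fun p : ℝ × ℝ => pdv (0,1) f p.1 p.2) :=
    h2.differentiable (by norm_num)
  rw [lap2, itd2, itd2]
  have e1 : deriv (fun s => f s y) = fun s => pdv (1,0) f s y :=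
    funext fun s => (hasDerivAt_pd1 f hd s y).deriv
  have e2 : deriv (f x) = fun t => pdv (0,1) f x t :=
    funext fun t => (hasDerivAt_pd2 f hd x t).deriv
  rw [e1, e2, (hasDerivAt_pd1 (pdv (1,0) f) hd1 x y).deriv,
    (hasDerivAt_pd2 (pdv (0,1) f) hd2 x y).deriv]

lemma pdv_add (v : ℝ × ℝ) (f g : ℝ → ℝ → ℝ)
    (hf : Differentiable ℝ (fun p : ℝ × ℝ => f p.1 p.2))
    (hg : Differentiable ℝ (fun p : ℝ × ℝ => g p.1 p.2)) (x y : ℝ) :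
    pdv v (fun a b => f a b + g a b) x y = pdv v f x y + pdv v g x y := by
  show fderiv ℝ (fun p : ℝ × ℝ => f p.1 p.2 + g p.1 p.2) (x,y) v = _
  rw [fderiv_fun_add (hf (x,y)) (hg (x,y))]
  simp [pdv]

lemma lap2_add (f g : ℝ → ℝ → ℝ)
    (hf : ContDiff ℝ 2 (fun p : ℝ × ℝ => f p.1 p.2))
    (hg : ContDiff ℝ 2 (fun p : ℝ × ℝ => g p.1 p.2)) (x y : ℝ) :
    lap2 (fun a b => f a b + g a b) x y = lap2 f x y + lap2 g x y := by
  have hdf : Differentiable ℝ (fun p : ℝ × ℝ => f p.1 p.2) := hf.differentiable (by norm_num)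
  have hdg : Differentiable ℝ (fun p : ℝ × ℝ => g p.1 p.2) := hg.differentiable (by norm_num)
  have hdf1 : ∀ v, Differentiable ℝ (fun p : ℝ × ℝ => pdv v f p.1 p.2) := fun v =>
    (contDiff_pdv v f 1 (by exact_mod_cast hf)).differentiable (by norm_num)
  have hdg1 : ∀ v, Differentiable ℝ (fun p : ℝ × ℝ => pdv v g p.1 p.2) := fun v =>
    (contDiff_pdv v g 1 (by exact_mod_cast hg)).differentiable (by norm_num)
  have hsum : ContDiff ℝ 2 (fun p : ℝ × ℝ => (fun a b => f a b + g a b) p.1 p.2) := hf.add hg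
  rw [lap2_eq _ hsum, lap2_eq f hf, lap2_eq g hg]
  have e : ∀ v : ℝ × ℝ, pdv v (fun a b => f a b + g a b) = fun a b => pdv v f a b + pdv v g a b :=
    fun v => funext fun a => funext fun b => pdv_add v f g hdf hdg a b
  rw [e, e]
  rw [pdv_add _ _ _ (hdf1 _) (hdg1 _), pdv_add _ _ _ (hdf1 _) (hdg1 _)]
  ring

lemma contDiff_T (k : ℕ) (c : ℝ) (g : ℝ → ℝ → ℝ)
    (hg : ContDiff ℝ 2 (fun p : ℝ × ℝ => g p.1 p.2)) :
    ContDiff ℝ 2 (fun p : ℝ × ℝ => (fun a b => c * (b ^ k * g a (-b))) p.1 p.2) := by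
  exact contDiff_const.mul ((contDiff_snd.pow k).mul
    (hg.comp (contDiff_fst.prodMk contDiff_snd.neg)))

lemma lap2_T (g : ℝ → ℝ → ℝ) (hg : ContDiff ℝ 2 (fun p : ℝ × ℝ => g p.1 p.2))
    (k : ℕ) (c x y : ℝ) :
    lap2 (fun a b => c * (b ^ k * g a (-b))) x y
      = c * (y ^ k * lap2 g x (-y)
          + (k : ℝ) * (((k-1 : ℕ) : ℝ) * y ^ (k-1-1)) * g x (-y)
          - 2 * (k : ℝ) * y ^ (k-1) * pdv (0,1) g x (-y)) := by
  have hd : Differentiable ℝ (fun p : ℝ × ℝ => g p.1 p.2) := hg.differentiable (by norm_num)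
  have hd1 : Differentiable ℝ (fun p : ℝ × ℝ => pdv (1,0) g p.1 p.2) :=
    (contDiff_pdv _ g 1 (by exact_mod_cast hg)).differentiable (by norm_num)
  have hd2 : Differentiable ℝ (fun p : ℝ × ℝ => pdv (0,1) g p.1 p.2) :=
    (contDiff_pdv _ g 1 (by exact_mod_cast hg)).differentiable (by norm_num)
  rw [lap2, itd2, itd2]
  -- x part
  have hx1 : ∀ s : ℝ, HasDerivAt (fun s' => c * (y ^ k * g s' (-y)))
      (c * (y ^ k * pdv (1,0) g s (-y))) s := fun s =>
    ((hasDerivAt_pd1 g hd s (-y)).const_mul (y ^ k)).const_mul c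
  have ex1 : deriv (fun s => (fun a b => c * (b ^ k * g a (-b))) s y)
      = fun s => c * (y ^ k * pdv (1,0) g s (-y)) := funext fun s => (hx1 s).deriv
  have hx2 : HasDerivAt (fun s => c * (y ^ k * pdv (1,0) g s (-y)))
      (c * (y ^ k * pdv (1,0) (pdv (1,0) g) x (-y))) x :=
    ((hasDerivAt_pd1 (pdv (1,0) g) hd1 x (-y)).const_mul (y ^ k)).const_mul c
  rw [ex1, hx2.deriv]
  -- y part
  have hyg : ∀ t : ℝ, HasDerivAt (fun t' => g x (-t')) (pdv (0,1) g x (-t) * (-1)) t :=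
    fun t => (hasDerivAt_pd2 g hd x (-t)).comp t (hasDerivAt_neg t)
  have hyg2 : ∀ t : ℝ, HasDerivAt (fun t' => pdv (0,1) g x (-t'))
      (pdv (0,1) (pdv (0,1) g) x (-t) * (-1)) t :=
    fun t => (hasDerivAt_pd2 (pdv (0,1) g) hd2 x (-t)).comp t (hasDerivAt_neg t)
  have hy1 : ∀ t : ℝ, HasDerivAt (fun t' => c * (t' ^ k * g x (-t')))
      (c * ((k : ℝ) * t ^ (k-1) * g x (-t) + t ^ k * (pdv (0,1) g x (-t) * (-1)))) t :=
    fun t => ((hasDerivAt_pow k t).mul (hyg t)).const_mul c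
  have ey1 : deriv (fun t => (fun a b => c * (b ^ k * g a (-b))) x t)
      = fun t => c * ((k : ℝ) * t ^ (k-1) * g x (-t) + t ^ k * (pdv (0,1) g x (-t) * (-1))) :=
    funext fun t => (hy1 t).deriv
  have hy2 : HasDerivAt
      (fun t => c * ((k : ℝ) * t ^ (k-1) * g x (-t) + t ^ k * (pdv (0,1) g x (-t) * (-1))))
      (c * ((((k : ℝ) * (((k-1 : ℕ) : ℝ) * y ^ (k-1-1))) * g x (-y)
            + ((k : ℝ) * y ^ (k-1)) * (pdv (0,1) g x (-y) * (-1)))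
          + ((k : ℝ) * y ^ (k-1) * (pdv (0,1) g x (-y) * (-1))
            + y ^ k * (pdv (0,1) (pdv (0,1) g) x (-y) * (-1) * (-1))))) y := by
    have hA : HasDerivAt (fun t : ℝ => (k : ℝ) * t ^ (k-1))
        ((k : ℝ) * (((k-1 : ℕ) : ℝ) * y ^ (k-1-1))) y :=
      (hasDerivAt_pow (k-1) y).const_mul (k : ℝ)
    have hB : HasDerivAt (fun t : ℝ => pdv (0,1) g x (-t) * (-1))
        (pdv (0,1) (pdv (0,1) g) x (-y) * (-1) * (-1)) y := (hyg2 y).mul_const (-1)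
    exact ((hA.mul (hyg y)).add ((hasDerivAt_pow k y).mul hB)).const_mul c
  rw [ey1, hy2.deriv]
  rw [lap2_eq g hg]
  ring

noncomputable def Dy (u : ℝ → ℝ → ℝ) : ℕ → ℝ → ℝ → ℝ
  | 0 => u
  | j+1 => pdv (0,1) (Dy u j)

noncomputable def Dp (u : ℝ → ℝ → ℝ) (i j : ℕ) : ℝ → ℝ → ℝ :=
  (pdv (1,0))^[i] (Dy u j)

lemma Dp_succ (u : ℝ → ℝ → ℝ) (i j : ℕ) :
    Dp u (i+1) j = pdv (1,0) (Dp u i j) := Function.iterate_succ_apply' _ _ _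

lemma Dp_zero (u : ℝ → ℝ → ℝ) (j : ℕ) : Dp u 0 j = Dy u j := rfl

section main
variable (u : ℝ → ℝ → ℝ) (hu : ContDiff ℝ 6 (fun p : ℝ × ℝ => u p.1 p.2))
include hu

lemma Dy_cd : ∀ j n : ℕ, n + j ≤ 6 →
    ContDiff ℝ (n : ℕ) (fun p : ℝ × ℝ => Dy u j p.1 p.2)
  | 0, n, h => hu.of_le (by exact_mod_cast h)
  | j+1, n, h => by
      rw [Dy]
      exact contDiff_pdv _ _ n (Dy_cd j (n+1) (by omega))

lemma Dp_cd : ∀ i : ℕ, ∀ j n : ℕ, n + i + j ≤ 6 →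
    ContDiff ℝ (n : ℕ) (fun p : ℝ × ℝ => Dp u i j p.1 p.2)
  | 0, j, n, h => Dy_cd u hu j n (by omega)
  | i+1, j, n, h => by
      rw [Dp_succ]
      exact contDiff_pdv _ _ n (Dp_cd i j (n+1) (by omega))

lemma Dp_c2 (i j : ℕ) (h : i + j ≤ 4) :
    ContDiff ℝ 2 (fun p : ℝ × ℝ => Dp u i j p.1 p.2) := by
  exact_mod_cast Dp_cd u hu i j 2 (by omega)

lemma Dp_diff (i j : ℕ) (h : i + j ≤ 5) :
    Differentiable ℝ (fun p : ℝ × ℝ => Dp u i j p.1 p.2) :=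
  (Dp_cd u hu i j 1 (by omega)).differentiable (by norm_num)

lemma pdv2_Dp : ∀ i j : ℕ, i + j ≤ 5 → ∀ x y : ℝ,
    pdv (0,1) (Dp u i j) x y = Dp u i (j+1) x y
  | 0, j, _, x, y => rfl
  | i+1, j, h, x, y => by
      rw [Dp_succ, Dp_succ]
      rw [clairaut (Dp u i j) (Dp_c2 u hu i j (by omega)) (0,1) (1,0) x y]
      have e : pdv (0,1) (Dp u i j) = Dp u i (j+1) :=
        funext fun a => funext fun b => pdv2_Dp i j (by omega) a b
      rw [e]

lemma lap2_Dp (i j : ℕ) (h : i + j ≤ 4) (x y : ℝ) :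
    lap2 (Dp u i j) x y = Dp u (i+2) j x y + Dp u i (j+2) x y := by
  rw [lap2_eq _ (Dp_c2 u hu i j h)]
  have e1 : pdv (1,0) (pdv (1,0) (Dp u i j)) = Dp u (i+2) j := by
    rw [show i + 2 = (i+1)+1 from rfl, Dp_succ, Dp_succ]
  have e2 : pdv (0,1) (Dp u i j) = Dp u i (j+1) :=
    funext fun a => funext fun b => pdv2_Dp u hu i j (by omega) a b
  rw [e1, e2, pdv2_Dp u hu i (j+1) (by omega)]

end main

noncomputable def Tm (c : ℝ) (k : ℕ) (g : ℝ → ℝ → ℝ) : ℝ → ℝ → ℝ :=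
  fun a b => c * (b ^ k * g a (-b))

noncomputable def Phi (c : ℝ) (k : ℕ) (g : ℝ → ℝ → ℝ) (x y : ℝ) : ℝ :=
  c * (y ^ k * lap2 g x (-y)
      + (k : ℝ) * (((k-1 : ℕ) : ℝ) * y ^ (k-1-1)) * g x (-y)
      - 2 * (k : ℝ) * y ^ (k-1) * pdv (0,1) g x (-y))

lemma Tm_c2 (c : ℝ) (k : ℕ) (g : ℝ → ℝ → ℝ)
    (hg : ContDiff ℝ 2 (fun p : ℝ × ℝ => g p.1 p.2)) :
    ContDiff ℝ 2 (fun p : ℝ × ℝ => Tm c k g p.1 p.2) := contDiff_T k c g hg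

lemma lap2_Tm (c : ℝ) (k : ℕ) (g : ℝ → ℝ → ℝ)
    (hg : ContDiff ℝ 2 (fun p : ℝ × ℝ => g p.1 p.2)) (x y : ℝ) :
    lap2 (Tm c k g) x y = Phi c k g x y := lap2_T g hg k c x y

lemma lap2_Tsum4 (c1 c2 c3 c4 : ℝ) (k1 k2 k3 k4 : ℕ) (g1 g2 g3 g4 : ℝ → ℝ → ℝ)
    (h1 : ContDiff ℝ 2 (fun p : ℝ × ℝ => g1 p.1 p.2))
    (h2 : ContDiff ℝ 2 (fun p : ℝ × ℝ => g2 p.1 p.2))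
    (h3 : ContDiff ℝ 2 (fun p : ℝ × ℝ => g3 p.1 p.2))
    (h4 : ContDiff ℝ 2 (fun p : ℝ × ℝ => g4 p.1 p.2)) (x y : ℝ) :
    lap2 (fun a b => Tm c1 k1 g1 a b + Tm c2 k2 g2 a b + Tm c3 k3 g3 a b + Tm c4 k4 g4 a b) x y
      = Phi c1 k1 g1 x y + Phi c2 k2 g2 x y + Phi c3 k3 g3 x y + Phi c4 k4 g4 x y := by
  have H1 := Tm_c2 c1 k1 g1 h1
  have H2 := Tm_c2 c2 k2 g2 h2
  have H3 := Tm_c2 c3 k3 g3 h3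
  have H4 := Tm_c2 c4 k4 g4 h4
  calc lap2 (fun a b => Tm c1 k1 g1 a b + Tm c2 k2 g2 a b + Tm c3 k3 g3 a b + Tm c4 k4 g4 a b) x y
      = lap2 (fun a b => Tm c1 k1 g1 a b + Tm c2 k2 g2 a b + Tm c3 k3 g3 a b) x y
        + lap2 (Tm c4 k4 g4) x y :=
        lap2_add _ _ ((H1.add H2).add H3) H4 x y
    _ = (lap2 (fun a b => Tm c1 k1 g1 a b + Tm c2 k2 g2 a b) x y
        + lap2 (Tm c3 k3 g3) x y) + lap2 (Tm c4 k4 g4) x y := by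
        rw [lap2_add _ _ (H1.add H2) H3 x y]
    _ = ((lap2 (Tm c1 k1 g1) x y + lap2 (Tm c2 k2 g2) x y)
        + lap2 (Tm c3 k3 g3) x y) + lap2 (Tm c4 k4 g4) x y := by
        rw [lap2_add _ _ H1 H2 x y]
    _ = Phi c1 k1 g1 x y + Phi c2 k2 g2 x y + Phi c3 k3 g3 x y + Phi c4 k4 g4 x y := by
        rw [lap2_Tm _ _ _ h1, lap2_Tm _ _ _ h2, lap2_Tm _ _ _ h3, lap2_Tm _ _ _ h4]

lemma lap2_Tsum7 (c1 c2 c3 c4 c5 c6 c7 : ℝ) (k1 k2 k3 k4 k5 k6 k7 : ℕ)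
    (g1 g2 g3 g4 g5 g6 g7 : ℝ → ℝ → ℝ)
    (h1 : ContDiff ℝ 2 (fun p : ℝ × ℝ => g1 p.1 p.2))
    (h2 : ContDiff ℝ 2 (fun p : ℝ × ℝ => g2 p.1 p.2))
    (h3 : ContDiff ℝ 2 (fun p : ℝ × ℝ => g3 p.1 p.2))
    (h4 : ContDiff ℝ 2 (fun p : ℝ × ℝ => g4 p.1 p.2))
    (h5 : ContDiff ℝ 2 (fun p : ℝ × ℝ => g5 p.1 p.2))
    (h6 : ContDiff ℝ 2 (fun p : ℝ × ℝ => g6 p.1 p.2))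
    (h7 : ContDiff ℝ 2 (fun p : ℝ × ℝ => g7 p.1 p.2)) (x y : ℝ) :
    lap2 (fun a b => Tm c1 k1 g1 a b + Tm c2 k2 g2 a b + Tm c3 k3 g3 a b + Tm c4 k4 g4 a b
        + Tm c5 k5 g5 a b + Tm c6 k6 g6 a b + Tm c7 k7 g7 a b) x y
      = Phi c1 k1 g1 x y + Phi c2 k2 g2 x y + Phi c3 k3 g3 x y + Phi c4 k4 g4 x y
        + Phi c5 k5 g5 x y + Phi c6 k6 g6 x y + Phi c7 k7 g7 x y := by
  have H1 := Tm_c2 c1 k1 g1 h1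
  have H2 := Tm_c2 c2 k2 g2 h2
  have H3 := Tm_c2 c3 k3 g3 h3
  have H4 := Tm_c2 c4 k4 g4 h4
  have H5 := Tm_c2 c5 k5 g5 h5
  have H6 := Tm_c2 c6 k6 g6 h6
  have H7 := Tm_c2 c7 k7 g7 h7
  calc lap2 (fun a b => Tm c1 k1 g1 a b + Tm c2 k2 g2 a b + Tm c3 k3 g3 a b + Tm c4 k4 g4 a b
        + Tm c5 k5 g5 a b + Tm c6 k6 g6 a b + Tm c7 k7 g7 a b) x y
      = lap2 (fun a b => Tm c1 k1 g1 a b + Tm c2 k2 g2 a b + Tm c3 k3 g3 a b + Tm c4 k4 g4 a b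
          + Tm c5 k5 g5 a b + Tm c6 k6 g6 a b) x y + lap2 (Tm c7 k7 g7) x y :=
        lap2_add _ _ (((((H1.add H2).add H3).add H4).add H5).add H6) H7 x y
    _ = (lap2 (fun a b => Tm c1 k1 g1 a b + Tm c2 k2 g2 a b + Tm c3 k3 g3 a b + Tm c4 k4 g4 a b
          + Tm c5 k5 g5 a b) x y + lap2 (Tm c6 k6 g6) x y) + lap2 (Tm c7 k7 g7) x y := by
        rw [lap2_add _ _ ((((H1.add H2).add H3).add H4).add H5) H6 x y]
    _ = ((lap2 (fun a b => Tm c1 k1 g1 a b + Tm c2 k2 g2 a b + Tm c3 k3 g3 a b + Tm c4 k4 g4 a b) x y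
          + lap2 (Tm c5 k5 g5) x y) + lap2 (Tm c6 k6 g6) x y) + lap2 (Tm c7 k7 g7) x y := by
        rw [lap2_add _ _ (((H1.add H2).add H3).add H4) H5 x y]
    _ = (((Phi c1 k1 g1 x y + Phi c2 k2 g2 x y + Phi c3 k3 g3 x y + Phi c4 k4 g4 x y)
          + lap2 (Tm c5 k5 g5) x y) + lap2 (Tm c6 k6 g6) x y) + lap2 (Tm c7 k7 g7) x y := by
        rw [lap2_Tsum4 c1 c2 c3 c4 k1 k2 k3 k4 g1 g2 g3 g4 h1 h2 h3 h4 x y]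
    _ = Phi c1 k1 g1 x y + Phi c2 k2 g2 x y + Phi c3 k3 g3 x y + Phi c4 k4 g4 x y
        + Phi c5 k5 g5 x y + Phi c6 k6 g6 x y + Phi c7 k7 g7 x y := by
        rw [lap2_Tm _ _ _ h5, lap2_Tm _ _ _ h6, lap2_Tm _ _ _ h7]

/-- If `u` is `C⁶`, `F = Δ²u`, and `w(x,y) = −[u(x,−y) + 2y u_y(x,−y) + y²(Δu)(x,−y)]`,
then for `y < 0`:
`(Δ²w)(x,y) = −[5F(x,−y) − 6y·F_y(x,−y) + y²·(ΔF)(x,−y)]`. -/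
theorem bilaplacian_of_reflection (u w F : ℝ → ℝ → ℝ)
    (hu : ContDiff ℝ 6 (fun p : ℝ × ℝ => u p.1 p.2))
    (hF : ∀ x y : ℝ, F x y = lap2 (fun a b => lap2 u a b) x y)
    (hw : ∀ x y : ℝ, w x y =
      -(u x (-y) + 2 * y * deriv (u x) (-y) + y ^ 2 * lap2 u x (-y))) :
    ∀ x y : ℝ, y < 0 →
      lap2 (fun a b => lap2 w a b) x y =
        -(5 * F x (-y) - 6 * y * deriv (F x) (-y) + y ^ 2 * lap2 F x (-y)) := by
  intro x y _
  have hdu : Differentiable ℝ (fun p : ℝ × ℝ => u p.1 p.2) := hu.differentiable (by norm_num)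
  -- Step A : closed form of w
  have hw1 : ∀ a b : ℝ, w a b = Tm (-1) 0 (Dp u 0 0) a b + Tm (-2) 1 (Dp u 0 1) a b
      + Tm (-1) 2 (Dp u 2 0) a b + Tm (-1) 2 (Dp u 0 2) a b := by
    intro a b
    rw [hw a b]
    have e1 : deriv (u a) (-b) = Dp u 0 1 a (-b) := (hasDerivAt_pd2 u hdu a (-b)).deriv
    have e2 : lap2 u a (-b) = Dp u 2 0 a (-b) + Dp u 0 2 a (-b) :=
      lap2_Dp u hu 0 0 (by omega) a (-b)
    have e0 : (u : ℝ → ℝ → ℝ) = Dp u 0 0 := rfl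
    rw [e1, e2]
    simp only [Tm]
    rw [show Dp u 0 0 a (-b) = u a (-b) from rfl]
    ring
  -- Step B : closed form of lap2 w
  have hlw : ∀ a b : ℝ, lap2 w a b = Tm (-3) 0 (Dp u 2 0) a b + Tm 1 0 (Dp u 0 2) a b
      + Tm 2 1 (Dp u 2 1) a b + Tm 2 1 (Dp u 0 3) a b + Tm (-1) 2 (Dp u 4 0) a b
      + Tm (-2) 2 (Dp u 2 2) a b + Tm (-1) 2 (Dp u 0 4) a b := by
    intro a b
    have ew : w = fun a b => Tm (-1) 0 (Dp u 0 0) a b + Tm (-2) 1 (Dp u 0 1) a b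
        + Tm (-1) 2 (Dp u 2 0) a b + Tm (-1) 2 (Dp u 0 2) a b :=
      funext fun a => funext fun b => hw1 a b
    rw [ew, lap2_Tsum4 (-1) (-2) (-1) (-1) 0 1 2 2 (Dp u 0 0) (Dp u 0 1) (Dp u 2 0) (Dp u 0 2)
      (Dp_c2 u hu 0 0 (by omega)) (Dp_c2 u hu 0 1 (by omega)) (Dp_c2 u hu 2 0 (by omega))
      (Dp_c2 u hu 0 2 (by omega)) a b]
    simp only [Phi, Tm]
    rw [lap2_Dp u hu 0 0 (by omega), lap2_Dp u hu 0 1 (by omega), lap2_Dp u hu 2 0 (by omega),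
      lap2_Dp u hu 0 2 (by omega), pdv2_Dp u hu 0 0 (by omega), pdv2_Dp u hu 0 1 (by omega),
      pdv2_Dp u hu 2 0 (by omega), pdv2_Dp u hu 0 2 (by omega)]
    norm_num
    ring
  -- closed form of F
  have hF2 : ∀ a b : ℝ, F a b = Dp u 4 0 a b + Dp u 2 2 a b + (Dp u 2 2 a b + Dp u 0 4 a b) := by
    intro a b
    rw [hF a b]
    have e : (fun a b => lap2 u a b) = fun a b => Dp u 2 0 a b + Dp u 0 2 a b :=
      funext fun a => funext fun b => lap2_Dp u hu 0 0 (by omega) a b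
    rw [e, lap2_add (Dp u 2 0) (Dp u 0 2) (Dp_c2 u hu 2 0 (by omega)) (Dp_c2 u hu 0 2 (by omega)) a b,
      lap2_Dp u hu 2 0 (by omega), lap2_Dp u hu 0 2 (by omega)]
  -- deriv of F x
  have hFd : deriv (F x) (-y)
      = Dp u 4 1 x (-y) + Dp u 2 3 x (-y) + (Dp u 2 3 x (-y) + Dp u 0 5 x (-y)) := by
    have eFx : F x = fun t => Dp u 4 0 x t + Dp u 2 2 x t + (Dp u 2 2 x t + Dp u 0 4 x t) :=
      funext fun t => hF2 x t
    rw [eFx]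
    have h1 := hasDerivAt_pd2 (Dp u 4 0) (Dp_diff u hu 4 0 (by omega)) x (-y)
    have h2 := hasDerivAt_pd2 (Dp u 2 2) (Dp_diff u hu 2 2 (by omega)) x (-y)
    have h4 := hasDerivAt_pd2 (Dp u 0 4) (Dp_diff u hu 0 4 (by omega)) x (-y)
    rw [((h1.fun_add h2).fun_add (h2.fun_add h4)).deriv]
    rw [pdv2_Dp u hu 4 0 (by omega), pdv2_Dp u hu 2 2 (by omega), pdv2_Dp u hu 0 4 (by omega)]
  -- lap2 of F
  have hFlap : lap2 F x (-y)
      = ((Dp u 6 0 x (-y) + Dp u 4 2 x (-y)) + (Dp u 4 2 x (-y) + Dp u 2 4 x (-y)))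
        + ((Dp u 4 2 x (-y) + Dp u 2 4 x (-y)) + (Dp u 2 4 x (-y) + Dp u 0 6 x (-y))) := by
    have eF : F = fun a b => Dp u 4 0 a b + Dp u 2 2 a b + (Dp u 2 2 a b + Dp u 0 4 a b) :=
      funext fun a => funext fun b => hF2 a b
    rw [eF]
    have hA : ContDiff ℝ 2 (fun p : ℝ × ℝ => (fun a b => Dp u 4 0 a b + Dp u 2 2 a b) p.1 p.2) :=
      (Dp_c2 u hu 4 0 (by omega)).add (Dp_c2 u hu 2 2 (by omega))
    have hB : ContDiff ℝ 2 (fun p : ℝ × ℝ => (fun a b => Dp u 2 2 a b + Dp u 0 4 a b) p.1 p.2) :=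
      (Dp_c2 u hu 2 2 (by omega)).add (Dp_c2 u hu 0 4 (by omega))
    calc lap2 (fun a b => Dp u 4 0 a b + Dp u 2 2 a b + (Dp u 2 2 a b + Dp u 0 4 a b)) x (-y)
        = lap2 (fun a b => Dp u 4 0 a b + Dp u 2 2 a b) x (-y)
          + lap2 (fun a b => Dp u 2 2 a b + Dp u 0 4 a b) x (-y) := lap2_add _ _ hA hB x (-y)
      _ = _ := by
          rw [lap2_add (Dp u 4 0) (Dp u 2 2) (Dp_c2 u hu 4 0 (by omega)) (Dp_c2 u hu 2 2 (by omega)),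
            lap2_add (Dp u 2 2) (Dp u 0 4) (Dp_c2 u hu 2 2 (by omega)) (Dp_c2 u hu 0 4 (by omega)),
            lap2_Dp u hu 4 0 (by omega), lap2_Dp u hu 2 2 (by omega), lap2_Dp u hu 0 4 (by omega)]
  -- final computation
  have ew2 : (fun a b => lap2 w a b) = fun a b => Tm (-3) 0 (Dp u 2 0) a b + Tm 1 0 (Dp u 0 2) a b
      + Tm 2 1 (Dp u 2 1) a b + Tm 2 1 (Dp u 0 3) a b + Tm (-1) 2 (Dp u 4 0) a b
      + Tm (-2) 2 (Dp u 2 2) a b + Tm (-1) 2 (Dp u 0 4) a b :=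
    funext fun a => funext fun b => hlw a b
  rw [ew2, lap2_Tsum7 (-3) 1 2 2 (-1) (-2) (-1) 0 0 1 1 2 2 2
    (Dp u 2 0) (Dp u 0 2) (Dp u 2 1) (Dp u 0 3) (Dp u 4 0) (Dp u 2 2) (Dp u 0 4)
    (Dp_c2 u hu 2 0 (by omega)) (Dp_c2 u hu 0 2 (by omega)) (Dp_c2 u hu 2 1 (by omega))
    (Dp_c2 u hu 0 3 (by omega)) (Dp_c2 u hu 4 0 (by omega)) (Dp_c2 u hu 2 2 (by omega))
    (Dp_c2 u hu 0 4 (by omega)) x y]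
  simp only [Phi]
  rw [lap2_Dp u hu 2 0 (by omega), lap2_Dp u hu 0 2 (by omega), lap2_Dp u hu 2 1 (by omega),
    lap2_Dp u hu 0 3 (by omega), lap2_Dp u hu 4 0 (by omega), lap2_Dp u hu 2 2 (by omega),
    lap2_Dp u hu 0 4 (by omega), pdv2_Dp u hu 2 0 (by omega), pdv2_Dp u hu 0 2 (by omega),
    pdv2_Dp u hu 2 1 (by omega), pdv2_Dp u hu 0 3 (by omega), pdv2_Dp u hu 4 0 (by omega),
    pdv2_Dp u hu 2 2 (by omega), pdv2_Dp u hu 0 4 (by omega)]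
  rw [hF2 x (-y), hFd, hFlap]
  norm_num
  ring
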